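/- For every tree T on n ≥ 2 vertices, I_d(T) ≥ 1 + log₂(√(n−1)), with equality if and only if T is the star K_{1,n−1}. -/

import Mathlib

/-!
With `m = n - 1` edges, `I_d(T) = 1 + log₂ √m + (m log₂ m - ∑ᵥ d(v) log₂ d(v)) / (2m)`, so
everything reduces to `∑ᵥ f(d(v)) ≤ f(m)` for `f(x) = x log₂ x`. The degrees of a tree lie in
`[1, m]` and `∑ᵥ (d(v) - 1) = m - 1`. As `f` is strictly convex with `f(1) = 0`, each term lies
below the chord of `f` over `[1, m]`: `(m - 1) f(d) ≤ (d - 1) f(m)`, strictly unless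
`d ∈ {1, m}`. Summing gives the bound, and equality forces a vertex of degree `m`, i.e. a star.
-/

open Finset

/-- Degree-based entropy: `I_d(G) = log₂(2m) - (1/(2m)) ∑_v d(v) log₂ d(v)`. -/
noncomputable def degEntropy {V : Type} [Fintype V] (G : SimpleGraph V) : ℝ :=
  Real.logb 2 (2 * (G.edgeSet.ncard : ℝ)) -
    (1 / (2 * (G.edgeSet.ncard : ℝ))) *
      ∑ v : V, ((G.neighborSet v).ncard : ℝ) * Real.logb 2 ((G.neighborSet v).ncard)

section Convexity

variable {𝕜 : Type*} [Field 𝕜] [LinearOrder 𝕜] [IsStrictOrderedRing 𝕜] {f : 𝕜 → 𝕜} {a b x : 𝕜}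

lemma ConvexOn.mul_le_of_mem_Icc (hf : ConvexOn 𝕜 (Set.Icc a b) f) (hx : x ∈ Set.Icc a b) :
    (b - a) * f x ≤ (b - x) * f a + (x - a) * f b := by
  obtain ⟨hax, hxb⟩ := hx
  rcases hax.eq_or_lt with rfl | hax
  · simp
  rcases hxb.eq_or_lt with rfl | hxb
  · simp
  exact hf.secant_mono_aux1 ⟨le_rfl, (hax.trans hxb).le⟩ ⟨(hax.trans hxb).le, le_rfl⟩ hax hxb

variable {ι : Type*} {s : Finset ι} {d : ι → 𝕜}

lemma ConvexOn.sum_le_of_sum_sub_eq (hf : ConvexOn 𝕜 (Set.Icc a b) f) (hfa : f a = 0)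
    (hd : ∀ i ∈ s, d i ∈ Set.Icc a b) (hsum : ∑ i ∈ s, (d i - a) = b - a) :
    ∑ i ∈ s, f (d i) ≤ f b := by
  have hab : a ≤ b := sub_nonneg.mp (hsum ▸ sum_nonneg fun i hi => sub_nonneg.mpr (hd i hi).1)
  rcases hab.eq_or_lt with rfl | hab
  · rw [hfa]
    exact (sum_eq_zero fun i hi => by rw [le_antisymm (hd i hi).2 (hd i hi).1, hfa]).le
  refine le_of_mul_le_mul_left ?_ (sub_pos.mpr hab)
  calc (b - a) * ∑ i ∈ s, f (d i) = ∑ i ∈ s, (b - a) * f (d i) := mul_sum _ _ _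
    _ ≤ ∑ i ∈ s, (d i - a) * f b := sum_le_sum fun i hi => by
        simpa [hfa] using hf.mul_le_of_mem_Icc (hd i hi)
    _ = (b - a) * f b := by rw [← sum_mul, hsum]

lemma StrictConvexOn.sum_lt_of_sum_sub_eq (hf : StrictConvexOn 𝕜 (Set.Icc a b) f) (hfa : f a = 0)
    (hd : ∀ i ∈ s, d i ∈ Set.Icc a b) (hsum : ∑ i ∈ s, (d i - a) = b - a) {j : ι} (hj : j ∈ s)
    (hdj : d j ∈ Set.Ioo a b) : ∑ i ∈ s, f (d i) < f b := by
  have hab : a < b := hdj.1.trans hdj.2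
  refine lt_of_mul_lt_mul_left ?_ (sub_pos.mpr hab).le
  calc (b - a) * ∑ i ∈ s, f (d i) = ∑ i ∈ s, (b - a) * f (d i) := mul_sum _ _ _
    _ < ∑ i ∈ s, (d i - a) * f b := sum_lt_sum
        (fun i hi => by simpa [hfa] using hf.convexOn.mul_le_of_mem_Icc (hd i hi))
        ⟨j, hj, by simpa [hfa] using
          hf.secant_strict_mono_aux1 ⟨le_rfl, hab.le⟩ ⟨hab.le, le_rfl⟩ hdj.1 hdj.2⟩
    _ = (b - a) * f b := by rw [← sum_mul, hsum]

end Convexity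

lemma Real.strictConvexOn_mul_logb {b : ℝ} (hb : 1 < b) :
    StrictConvexOn ℝ (Set.Ici 0) fun x => x * Real.logb b x := by
  refine ⟨convex_Ici 0, fun x hx y hy hxy p q hp hq hpq => ?_⟩
  have key := Real.strictConvexOn_mul_log.2 hx hy hxy hp hq hpq
  have hlogb := Real.log_pos hb
  simp only [smul_eq_mul, Real.logb] at key ⊢
  calc (p * x + q * y) * (Real.log (p * x + q * y) / Real.log b)
      = (p * x + q * y) * Real.log (p * x + q * y) / Real.log b := by ring
    _ < (p * (x * Real.log x) + q * (y * Real.log y)) / Real.log b := by gcongr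
    _ = _ := by ring

lemma Real.strictConvexOn_mul_logb_Icc {b x y : ℝ} (hb : 1 < b) (hx : 0 ≤ x) :
    StrictConvexOn ℝ (Set.Icc x y) fun t => t * Real.logb b t :=
  (Real.strictConvexOn_mul_logb hb).subset (fun _ ht => hx.trans ht.1) (convex_Icc x y)

namespace SimpleGraph

variable {V : Type*}

lemma eq_starGraph_of_iso {G : SimpleGraph V} {r : V} (e : G ≃g starGraph r) :
    G = starGraph (e.symm r) := by
  ext u v
  simp only [← e.map_adj_iff, starGraph_adj, e.injective.ne_iff, RelIso.eq_symm_apply]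

variable [Fintype V]

noncomputable def starGraphIsoCompleteBipartiteGraph [DecidableEq V] (r : V) :
    starGraph r ≃g completeBipartiteGraph (Fin 1) (Fin (Fintype.card V - 1)) where
  toEquiv := (Equiv.sumCompl (· = r)).symm.trans <| Equiv.sumCongr
    (Fintype.equivFinOfCardEq (Fintype.card_subtype_eq r))
    (Fintype.equivFinOfCardEq (by simp [Fintype.card_subtype_compl]))
  map_rel_iff' {u v} := by
    by_cases hu : u = r <;> by_cases hv : v = r <;>
      simp [hu, hv, eq_comm (a := r), Equiv.sumCompl_symm_apply_of_pos,
        Equiv.sumCompl_symm_apply_of_neg]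

lemma nonempty_iso_completeBipartiteGraph_iff [Nonempty V] {G : SimpleGraph V} :
    Nonempty (G ≃g completeBipartiteGraph (Fin 1) (Fin (Fintype.card V - 1))) ↔
      ∃ r, G = starGraph r := by
  classical
  constructor
  · rintro ⟨e⟩
    exact ⟨_, eq_starGraph_of_iso
      (e.trans (starGraphIsoCompleteBipartiteGraph (Classical.arbitrary V)).symm)⟩
  · rintro ⟨r, rfl⟩
    exact ⟨starGraphIsoCompleteBipartiteGraph r⟩

variable {T : SimpleGraph V}

lemma IsTree.eq_starGraph_of_isUniversal (hT : T.IsTree) {r : V} (hr : T.IsUniversal r) :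
    T = starGraph r := by
  classical
  have hle : starGraph r ≤ T := by
    rintro u v ⟨huv, rfl | rfl⟩
    · exact hr huv
    · exact (hr huv.symm).symm
  have hcard := (isTree_starGraph r).card_edgeFinset.trans hT.card_edgeFinset.symm
  exact (edgeFinset_inj.mp
    (eq_of_subset_of_card_le (edgeFinset_subset_edgeFinset.mpr hle) (by omega))).symm

noncomputable def degreeLogSum (G : SimpleGraph V) [DecidableRel G.Adj] : ℝ :=
  ∑ v, (G.degree v : ℝ) * Real.logb 2 (G.degree v)

lemma degreeLogSum_starGraph (r : V) [DecidableRel (starGraph r).Adj] :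
    (starGraph r).degreeLogSum =
      ((Fintype.card V - 1 : ℕ) : ℝ) * Real.logb 2 ((Fintype.card V - 1 : ℕ) : ℝ) := by
  classical
  -- `convert`: the lemmas used are stated for the instance derived from `DecidableEq V`
  have hr : (starGraph r).degree r = Fintype.card V - 1 := by
    convert degree_starGraph_center (r := r)
  have hleaf {v : V} (hv : v ≠ r) : (starGraph r).degree v = 1 := by
    convert degree_starGraph_of_ne_center hv
  rw [degreeLogSum, sum_eq_single r (fun v _ hv => by simp [hleaf hv]) (by simp), hr]

variable [DecidableRel T.Adj]

lemma IsTree.degree_mem_Icc [Nontrivial V] (hT : T.IsTree) (v : V) :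
    (T.degree v : ℝ) ∈ Set.Icc 1 ((Fintype.card V - 1 : ℕ) : ℝ) := by
  have hlt := T.degree_lt_card_verts v
  exact ⟨mod_cast hT.connected.preconnected.degree_pos_of_nontrivial v, mod_cast (by omega)⟩

lemma IsTree.sum_degree_sub_one (hT : T.IsTree) :
    ∑ v, ((T.degree v : ℝ) - 1) = ((Fintype.card V - 1 : ℕ) : ℝ) - 1 := by
  have hsum : ∑ v, (T.degree v : ℝ) = 2 * #T.edgeFinset := by
    exact_mod_cast T.sum_degrees_eq_twice_card_edges
  have hcard := hT.card_edgeFinset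
  rw [sum_sub_distrib, hsum, sum_const, card_univ, ← hcard, Nat.add_sub_cancel]
  ring

lemma IsTree.degreeLogSum_le [Nontrivial V] (hT : T.IsTree) :
    T.degreeLogSum ≤
      ((Fintype.card V - 1 : ℕ) : ℝ) * Real.logb 2 ((Fintype.card V - 1 : ℕ) : ℝ) :=
  (Real.strictConvexOn_mul_logb_Icc one_lt_two zero_le_one).convexOn.sum_le_of_sum_sub_eq
    (by simp) (fun v _ => hT.degree_mem_Icc v) hT.sum_degree_sub_one

lemma IsTree.degreeLogSum_eq_iff [Nontrivial V] (hT : T.IsTree) :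
    T.degreeLogSum =
        ((Fintype.card V - 1 : ℕ) : ℝ) * Real.logb 2 ((Fintype.card V - 1 : ℕ) : ℝ) ↔
      ∃ r, T = starGraph r := by
  constructor
  · intro heq
    by_contra! hno
    have hlt (v : V) : T.degree v < Fintype.card V - 1 :=
      (T.degree_lt_card_sub_one v).mpr fun hv => hno v (hT.eq_starGraph_of_isUniversal hv)
    have hleaf (v : V) : T.degree v = 1 := by
      by_contra hv
      refine ((Real.strictConvexOn_mul_logb_Icc one_lt_two zero_le_one).sum_lt_of_sum_sub_eq
        (by simp) (fun v _ => hT.degree_mem_Icc v) hT.sum_degree_sub_one (mem_univ v)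
        ⟨(hT.degree_mem_Icc v).1.lt_of_ne (mod_cast Ne.symm hv), mod_cast hlt v⟩).ne heq
    have hm := hT.sum_degree_sub_one
    simp only [hleaf, Nat.cast_one, sub_self, sum_const_zero] at hm
    have h1 : (1 : ℝ) < ((Fintype.card V - 1 : ℕ) : ℝ) :=
      mod_cast hleaf (Classical.arbitrary V) ▸ hlt (Classical.arbitrary V)
    linarith
  · rintro ⟨r, rfl⟩
    exact degreeLogSum_starGraph r

end SimpleGraph

namespace SimpleGraph

variable {V : Type} [Fintype V]

lemma degEntropy_eq_degreeLogSum (G : SimpleGraph V) [DecidableRel G.Adj] :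
    degEntropy G =
      Real.logb 2 (2 * #G.edgeFinset) - 1 / (2 * #G.edgeFinset) * G.degreeLogSum := by
  simp only [degEntropy, degreeLogSum, Set.ncard_eq_toFinset_card', Set.toFinset_card,
    card_neighborSet_eq_degree, edgeFinset_card]

lemma IsTree.degEntropy_eq [Nontrivial V] {T : SimpleGraph V} [DecidableRel T.Adj]
    (hT : T.IsTree) :
    degEntropy T = 1 + Real.logb 2 √((Fintype.card V - 1 : ℕ) : ℝ) +
      (((Fintype.card V - 1 : ℕ) : ℝ) * Real.logb 2 ((Fintype.card V - 1 : ℕ) : ℝ) -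
        T.degreeLogSum) / (2 * ((Fintype.card V - 1 : ℕ) : ℝ)) := by
  have hE : #T.edgeFinset = Fintype.card V - 1 := by have := hT.card_edgeFinset; omega
  have hm : (0 : ℝ) < #T.edgeFinset :=
    Nat.cast_pos.mpr (by have := Fintype.one_lt_card (α := V); omega)
  rw [degEntropy_eq_degreeLogSum, ← hE, Real.logb_mul two_ne_zero hm.ne',
    Real.logb_self_eq_one one_lt_two]
  simp only [Real.logb, Real.log_sqrt hm.le]
  field_simp
  ring

end SimpleGraph

open SimpleGraph

/-- every tree on `n ≥ 2` vertices satisfies `I_d(T) ≥ 1 + log₂ √(n-1)`,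
with equality iff `T` is the star `K_{1,n-1}`. -/
theorem tree_entropy_lower_bound {n : ℕ} (hn : 2 ≤ n) (T : SimpleGraph (Fin n))
    (hconn : T.Connected) (hacyc : T.IsAcyclic) :
    1 + Real.logb 2 (Real.sqrt ((n - 1 : ℕ) : ℝ)) ≤ degEntropy T ∧
      (degEntropy T = 1 + Real.logb 2 (Real.sqrt ((n - 1 : ℕ) : ℝ)) ↔
        Nonempty (T ≃g completeBipartiteGraph (Fin 1) (Fin (n - 1)))) := by
  classical
  have : Nontrivial (Fin n) := Fin.nontrivial_iff_two_le.mpr hn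
  have hT : T.IsTree := ⟨hconn, hacyc⟩
  have hm : (0 : ℝ) < ((n - 1 : ℕ) : ℝ) := by exact_mod_cast (by omega : 0 < n - 1)
  have hent := hT.degEntropy_eq
  have hle := hT.degreeLogSum_le
  have heq := hT.degreeLogSum_eq_iff
  have hiso := nonempty_iso_completeBipartiteGraph_iff (G := T)
  simp only [Fintype.card_fin] at hent hle heq
  rw [Fintype.card_fin] at hiso
  have h2m : (0 : ℝ) < 2 * ((n - 1 : ℕ) : ℝ) := mul_pos two_pos hm
  rw [hent, hiso, ← heq, add_eq_left, div_eq_zero_iff, or_iff_left h2m.ne', sub_eq_zero, eq_comm]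
  exact ⟨le_add_of_nonneg_right (div_nonneg (sub_nonneg.mpr hle) h2m.le), Iff.rfl⟩
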